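/- Let H be a finite group, U, U' finite-dimensional orthogonal H-representations, ε a 1-dimensional orthogonal H-representation, and r : Mor_H(U ⊕ ε, U') → Mor_H(U, U') the restriction map along the inclusion U ↪ U ⊕ ε. Then for any orthogonal H-representation α, the pullback bundle r*γ_{H,α}(U, U') is H-equivariantly isomorphic to the Whitney sum of the trivial bundle with fiber α ⊗ ε and the bundle γ_{H,α}(U ⊕ ε, U'). -/

import Mathlib

/-! Write `J = g ∘ inr : ε → U'` for the restriction of `g` to `ε`. Since `g` is isometric, so is
`J`, hence `J† J = 1` and `J J†` is the orthogonal projection onto `g(ε)`. A vector `v ⊥ g(U)`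
therefore splits as `v = (v - J J† v) + J (J† v)`, where `J† v ∈ ε` and `v - J J† v` is
orthogonal to `g(U) + g(ε) = im g`; conversely `w + J t` is orthogonal to `g(U)` whenever
`w ⊥ im g`. Both directions are built from `g` by adjoints and compositions, so they are
continuous, fibrewise linear, and commute with the conjugation actions because the adjoint of
an isometric isomorphism is its inverse. -/

/-- The Stiefel space `Mor_H(U ⊕ ε, W)` of linear isometric embeddings `U ⊕ E → W`. -/
abbrev MorSum (U E W : Type) [NormedAddCommGroup U] [InnerProductSpace ℝ U]
    [NormedAddCommGroup E] [InnerProductSpace ℝ E]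
    [NormedAddCommGroup W] [InnerProductSpace ℝ W] : Type :=
  {g : WithLp 2 (U × E) →L[ℝ] W // Isometry g}

/-- The total space of the pullback `r*γ_{H,α}(U, U')` along the restriction map
`r : Mor(U ⊕ ε, U') → Mor(U, U')`: pairs of a `g : U ⊕ ε → U'` and a vector of
`α ⊗ (im g|_U)^⊥`, encoded as a linear map `A → U'` orthogonal to `g(U)`. -/
abbrev PullbackTotal (U E W A : Type) [NormedAddCommGroup U] [InnerProductSpace ℝ U]
    [NormedAddCommGroup E] [InnerProductSpace ℝ E]
    [NormedAddCommGroup W] [InnerProductSpace ℝ W]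
    [NormedAddCommGroup A] [InnerProductSpace ℝ A] : Type :=
  {x : MorSum U E W × (A →L[ℝ] W) //
    ∀ (a : A) (u : U), @inner ℝ W _ (x.2 a) (x.1.1 ((WithLp.equiv 2 (U × E)).symm (u, 0))) = 0}

/-- The total space of the Whitney sum of the trivial bundle with fiber `α ⊗ ε` (encoded
as `Hom(A, E)`) and the bundle `γ_{H,α}(U ⊕ ε, U')` (whose fiber over `g` is
`α ⊗ (im g)^⊥`). -/
abbrev SumTotal (U E W A : Type) [NormedAddCommGroup U] [InnerProductSpace ℝ U]
    [NormedAddCommGroup E] [InnerProductSpace ℝ E]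
    [NormedAddCommGroup W] [InnerProductSpace ℝ W]
    [NormedAddCommGroup A] [InnerProductSpace ℝ A] : Type :=
  {x : MorSum U E W × ((A →L[ℝ] E) × (A →L[ℝ] W)) //
    ∀ (a : A) (z : WithLp 2 (U × E)), @inner ℝ W _ (x.2.2 a) (x.1.1 z) = 0}

open ContinuousLinearMap

noncomputable section

namespace ContinuousLinearMap

variable {E E' W W' : Type} [NormedAddCommGroup E] [InnerProductSpace ℝ E] [CompleteSpace E]
  [NormedAddCommGroup E'] [InnerProductSpace ℝ E'] [CompleteSpace E']
  [NormedAddCommGroup W] [InnerProductSpace ℝ W] [CompleteSpace W]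
  [NormedAddCommGroup W'] [InnerProductSpace ℝ W'] [CompleteSpace W']

lemma adjoint_conj_linearIsometryEquiv (J : E →L[ℝ] W) (σ : E ≃ₗᵢ[ℝ] E') (τ : W ≃ₗᵢ[ℝ] W') :
    adjoint ((τ : W →L[ℝ] W') ∘L J ∘L (σ.symm : E' →L[ℝ] E)) =
      (σ : E →L[ℝ] E') ∘L adjoint J ∘L (τ.symm : W' →L[ℝ] W) := by
  simp only [adjoint_comp, LinearIsometryEquiv.adjoint_eq_symm, LinearIsometryEquiv.symm_symm,
    comp_assoc]

end ContinuousLinearMap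

namespace MorSum

variable {U E W : Type} [NormedAddCommGroup U] [InnerProductSpace ℝ U]
  [NormedAddCommGroup E] [InnerProductSpace ℝ E] [NormedAddCommGroup W] [InnerProductSpace ℝ W]

def restrictRight (g : MorSum U E W) : E →L[ℝ] W :=
  g.1 ∘L ((WithLp.prodContinuousLinearEquiv 2 ℝ U E).symm : U × E →L[ℝ] WithLp 2 (U × E)) ∘L
    inr ℝ U E

@[simp]
lemma restrictRight_apply (g : MorSum U E W) (e : E) :
    g.restrictRight e = g.1 (WithLp.toLp 2 (0, e)) := rfl

@[fun_prop]
lemma continuous_restrictRight : Continuous (restrictRight : MorSum U E W → E →L[ℝ] W) :=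
  continuous_subtype_val.clm_comp continuous_const

lemma inner_map_map (g : MorSum U E W) (z z' : WithLp 2 (U × E)) :
    inner ℝ (g.1 z) (g.1 z') = inner ℝ z z' :=
  (LinearMap.norm_map_iff_inner_map_map g.1.toLinearMap).mp
    ((AddMonoidHomClass.isometry_iff_norm g.1).mp g.2) z z'

lemma inner_restrictRight_map_inl (g : MorSum U E W) (e : E) (u : U) :
    inner ℝ (g.restrictRight e) (g.1 (WithLp.toLp 2 (u, 0))) = 0 := by
  simp [inner_map_map]

lemma inner_restrictRight_restrictRight (g : MorSum U E W) (e e' : E) :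
    inner ℝ (g.restrictRight e) (g.restrictRight e') = inner ℝ e e' := by
  simp [inner_map_map]

section Complete

variable [CompleteSpace E] [CompleteSpace W]

lemma adjoint_restrictRight_comp_self (g : MorSum U E W) :
    adjoint g.restrictRight ∘L g.restrictRight = 1 :=
  (norm_map_iff_adjoint_comp_self _).mp fun e => by
    rw [restrictRight_apply, AddMonoidHomClass.isometry_iff_norm _ |>.mp g.2]
    simp

lemma inner_sub_restrictRight_adjoint_map_eq_zero (g : MorSum U E W) {w : W}
    (hw : ∀ u : U, inner ℝ w (g.1 (WithLp.toLp 2 (u, 0))) = 0) (z : WithLp 2 (U × E)) :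
    inner ℝ (w - g.restrictRight (adjoint g.restrictRight w)) (g.1 z) = 0 := by
  have hz : z = WithLp.toLp 2 (z.fst, 0) + WithLp.toLp 2 (0, z.snd) :=
    (WithLp.ext_iff 2).mpr (by ext <;> simp)
  have hJ : inner ℝ (g.restrictRight (adjoint g.restrictRight w)) (g.1 (WithLp.toLp 2 (0, z.snd)))
      = inner ℝ w (g.1 (WithLp.toLp 2 (0, z.snd))) := by
    rw [← restrictRight_apply, inner_restrictRight_restrictRight, adjoint_inner_left]
  rw [hz, map_add, inner_add_right, inner_sub_left, inner_sub_left, hw, hJ,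
    inner_restrictRight_map_inl]
  simp

lemma adjoint_restrictRight_add_apply (g : MorSum U E W) {w : W}
    (hw : ∀ z, inner ℝ w (g.1 z) = 0) (e : E) :
    adjoint g.restrictRight (w + g.restrictRight e) = e := by
  have hw0 : adjoint g.restrictRight w = 0 :=
    ext_inner_right ℝ fun e' => by simp [adjoint_inner_left, hw]
  rw [map_add, hw0, zero_add, ← comp_apply, adjoint_restrictRight_comp_self]
  rfl

end Complete

end MorSum

section Bundle

variable {U E W A : Type} [NormedAddCommGroup U] [InnerProductSpace ℝ U]
  [NormedAddCommGroup E] [InnerProductSpace ℝ E] [NormedAddCommGroup W] [InnerProductSpace ℝ W]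
  [NormedAddCommGroup A] [InnerProductSpace ℝ A]

def SumTotal.toPullback (y : SumTotal U E W A) : PullbackTotal U E W A :=
  ⟨(y.1.1, y.1.2.2 + y.1.1.restrictRight ∘L y.1.2.1), fun a u => by
    simp only [add_apply, comp_apply, inner_add_left, y.2 a, MorSum.inner_restrictRight_map_inl,
      WithLp.equiv_symm_apply, zero_add]⟩

variable [CompleteSpace E] [CompleteSpace W]

def PullbackTotal.toSum (x : PullbackTotal U E W A) : SumTotal U E W A :=
  ⟨(x.1.1, adjoint x.1.1.restrictRight ∘L x.1.2,
      x.1.2 - x.1.1.restrictRight ∘L adjoint x.1.1.restrictRight ∘L x.1.2),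
    fun a => x.1.1.inner_sub_restrictRight_adjoint_map_eq_zero (x.2 a)⟩

namespace PullbackTotal

def homeomorphSum : PullbackTotal U E W A ≃ₜ SumTotal U E W A where
  toFun := toSum
  invFun := SumTotal.toPullback
  left_inv x := Subtype.ext <| Prod.ext rfl <| by
    ext a
    simp [toSum, SumTotal.toPullback]
  right_inv y := Subtype.ext <| Prod.ext rfl <| by
    have hT : adjoint y.1.1.restrictRight ∘L (y.1.2.2 + y.1.1.restrictRight ∘L y.1.2.1) = y.1.2.1 :=
      ext fun a => y.1.1.adjoint_restrictRight_add_apply (y.2 a) _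
    simp only [toSum, SumTotal.toPullback, hT]
    simp
  continuous_toFun := by
    unfold toSum
    fun_prop
  continuous_invFun := by
    unfold SumTotal.toPullback
    fun_prop

@[simp]
lemma homeomorphSum_apply (x : PullbackTotal U E W A) : homeomorphSum x = toSum x := rfl

lemma snd_apply_eq_toSum_add (x : PullbackTotal U E W A) (a : A) :
    x.1.2 a = (toSum x).1.2.2 a + x.1.1.restrictRight ((toSum x).1.2.1 a) := by
  simp [toSum]

lemma toSum_snd_of_linear_combination {x y z : PullbackTotal U E W A} {c : ℝ}
    (hy : y.1.1 = x.1.1) (hz : z.1.1 = x.1.1) (hv : z.1.2 = c • x.1.2 + y.1.2) :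
    (toSum z).1.2 = c • (toSum x).1.2 + (toSum y).1.2 := by
  simp only [toSum, hy, hz, hv]
  ext a <;> simp
  module

lemma toSum_snd_of_conj (σ : E ≃ₗᵢ[ℝ] E) (τ : W ≃ₗᵢ[ℝ] W) (π : A ≃ₗᵢ[ℝ] A)
    {x x' : PullbackTotal U E W A}
    (hg : x'.1.1.restrictRight = (τ : W →L[ℝ] W) ∘L x.1.1.restrictRight ∘L (σ.symm : E →L[ℝ] E))
    (hv : x'.1.2 = (τ : W →L[ℝ] W) ∘L x.1.2 ∘L (π.symm : A →L[ℝ] A)) :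
    (toSum x').1.2.1 = (σ : E →L[ℝ] E) ∘L (toSum x).1.2.1 ∘L (π.symm : A →L[ℝ] A) ∧
      (toSum x').1.2.2 = (τ : W →L[ℝ] W) ∘L (toSum x).1.2.2 ∘L (π.symm : A →L[ℝ] A) := by
  simp only [toSum, hg, hv, adjoint_conj_linearIsometryEquiv]
  constructor <;> ext a <;> simp

end PullbackTotal

end Bundle

end

theorem stmt6_general (H : Type) [Group H]
    (U E W A : Type) [NormedAddCommGroup U] [InnerProductSpace ℝ U]
    [NormedAddCommGroup E] [InnerProductSpace ℝ E] [FiniteDimensional ℝ E]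
    [NormedAddCommGroup W] [InnerProductSpace ℝ W] [FiniteDimensional ℝ W]
    [NormedAddCommGroup A] [InnerProductSpace ℝ A]
    (ρU : H →* (U ≃ₗᵢ[ℝ] U)) (ρE : H →* (E ≃ₗᵢ[ℝ] E)) (ρW : H →* (W ≃ₗᵢ[ℝ] W))
    (ρA : H →* (A ≃ₗᵢ[ℝ] A)) :
    ∃ φ : PullbackTotal U E W A ≃ₜ SumTotal U E W A,
      -- φ is a map of bundles over Mor(U ⊕ ε, U')
      (∀ x : PullbackTotal U E W A, (φ x).1.1 = x.1.1) ∧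
      -- defining formula: v = w + g(0, t a), i.e. decompose v into the g(ε)-component
      -- (the trivial `α ⊗ ε` factor) and the part orthogonal to all of im g
      (∀ (x : PullbackTotal U E W A) (a : A),
        x.1.2 a = (φ x).1.2.2 a +
          x.1.1.1 ((WithLp.equiv 2 (U × E)).symm (0, (φ x).1.2.1 a))) ∧
      -- φ is fiberwise linear
      (∀ (x y z : PullbackTotal U E W A) (c : ℝ),
        y.1.1 = x.1.1 → z.1.1 = x.1.1 →
        (∀ a : A, z.1.2 a = c • x.1.2 a + y.1.2 a) →
        (∀ a : A, (φ z).1.2.1 a = c • (φ x).1.2.1 a + (φ y).1.2.1 a) ∧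
        (∀ a : A, (φ z).1.2.2 a = c • (φ x).1.2.2 a + (φ y).1.2.2 a)) ∧
      -- φ is H-equivariant for the conjugation actions
      (∀ (h : H) (x x' : PullbackTotal U E W A),
        (∀ (u : U) (e : E), x'.1.1.1 ((WithLp.equiv 2 (U × E)).symm (u, e)) =
          ρW h (x.1.1.1 ((WithLp.equiv 2 (U × E)).symm (ρU h⁻¹ u, ρE h⁻¹ e)))) →
        (∀ a : A, x'.1.2 a = ρW h (x.1.2 (ρA h⁻¹ a))) →
        (∀ a : A, (φ x').1.2.1 a = ρE h ((φ x).1.2.1 (ρA h⁻¹ a))) ∧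
        (∀ a : A, (φ x').1.2.2 a = ρW h ((φ x).1.2.2 (ρA h⁻¹ a)))) := by
  refine ⟨PullbackTotal.homeomorphSum, fun x => rfl, fun x a => ?_,
    fun x y z c hy hz hv => ?_, fun h x x' hg hv => ?_⟩
  · exact x.snd_apply_eq_toSum_add a
  · have hsum := PullbackTotal.toSum_snd_of_linear_combination hy hz (ext hv)
    exact ⟨fun a => congr($hsum.1 a), fun a => congr($hsum.2 a)⟩
  · have hinv {V : Type} [NormedAddCommGroup V] [InnerProductSpace ℝ V]
        (ρ : H →* (V ≃ₗᵢ[ℝ] V)) : ρ h⁻¹ = (ρ h).symm := by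
      rw [map_inv, LinearIsometryEquiv.inv_def]
    obtain ⟨hT, hW⟩ := PullbackTotal.toSum_snd_of_conj (ρE h) (ρW h) (ρA h)
      (ext fun e => by simpa [hinv] using hg 0 e) (ext fun a => by simpa [hinv] using hv a)
    exact ⟨fun a => by simpa [hinv] using congr($hT a),
      fun a => by simpa [hinv] using congr($hW a)⟩

/-- For a 1-dimensional orthogonal `H`-representation `ε` (here `E`) and
orthogonal `H`-representations `U`, `U'` (here `W`), `α` (here `A`), the pullback bundle
`r*γ_{H,α}(U,U')` along restriction is `H`-equivariantly isomorphic, as a vector bundle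
over `Mor_H(U ⊕ ε, U')`, to the Whitney sum of the trivial bundle with fiber `α ⊗ ε` and
the bundle `γ_{H,α}(U ⊕ ε, U')`, via the decomposition `(im g|_U)^⊥ ≅ g(ε) ⊕ (im g)^⊥`
with `g(ε) ≅ ε`. -/
theorem stmt6 (H : Type) [Group H] [Finite H]
    (U E W A : Type) [NormedAddCommGroup U] [InnerProductSpace ℝ U] [FiniteDimensional ℝ U]
    [NormedAddCommGroup E] [InnerProductSpace ℝ E] [FiniteDimensional ℝ E]
    [NormedAddCommGroup W] [InnerProductSpace ℝ W] [FiniteDimensional ℝ W]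
    [NormedAddCommGroup A] [InnerProductSpace ℝ A] [FiniteDimensional ℝ A]
    (hE : Module.finrank ℝ E = 1)
    (ρU : H →* (U ≃ₗᵢ[ℝ] U)) (ρE : H →* (E ≃ₗᵢ[ℝ] E)) (ρW : H →* (W ≃ₗᵢ[ℝ] W))
    (ρA : H →* (A ≃ₗᵢ[ℝ] A)) :
    ∃ φ : PullbackTotal U E W A ≃ₜ SumTotal U E W A,
      -- φ is a map of bundles over Mor(U ⊕ ε, U')
      (∀ x : PullbackTotal U E W A, (φ x).1.1 = x.1.1) ∧
      -- defining formula: v = w + g(0, t a), i.e. decompose v into the g(ε)-component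
      -- (the trivial `α ⊗ ε` factor) and the part orthogonal to all of im g
      (∀ (x : PullbackTotal U E W A) (a : A),
        x.1.2 a = (φ x).1.2.2 a +
          x.1.1.1 ((WithLp.equiv 2 (U × E)).symm (0, (φ x).1.2.1 a))) ∧
      -- φ is fiberwise linear
      (∀ (x y z : PullbackTotal U E W A) (c : ℝ),
        y.1.1 = x.1.1 → z.1.1 = x.1.1 →
        (∀ a : A, z.1.2 a = c • x.1.2 a + y.1.2 a) →
        (∀ a : A, (φ z).1.2.1 a = c • (φ x).1.2.1 a + (φ y).1.2.1 a) ∧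
        (∀ a : A, (φ z).1.2.2 a = c • (φ x).1.2.2 a + (φ y).1.2.2 a)) ∧
      -- φ is H-equivariant for the conjugation actions
      (∀ (h : H) (x x' : PullbackTotal U E W A),
        (∀ (u : U) (e : E), x'.1.1.1 ((WithLp.equiv 2 (U × E)).symm (u, e)) =
          ρW h (x.1.1.1 ((WithLp.equiv 2 (U × E)).symm (ρU h⁻¹ u, ρE h⁻¹ e)))) →
        (∀ a : A, x'.1.2 a = ρW h (x.1.2 (ρA h⁻¹ a))) →
        (∀ a : A, (φ x').1.2.1 a = ρE h ((φ x).1.2.1 (ρA h⁻¹ a))) ∧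
        (∀ a : A, (φ x').1.2.2 a = ρW h ((φ x).1.2.2 (ρA h⁻¹ a)))) :=
  stmt6_general H U E W A ρU ρE ρW ρA
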